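/- arXiv:2202.06952 — 8 statements merged into one kernel-verified Lean document; each statement's English description precedes it below -/
import Mathlib

section
/- Let G = H × K be a direct product of finite abelian groups, and let x : G → ℂ. Then the group determinant of G evaluated at x factorizes as Θ(G)(x) = ∏_{χ ∈ K̂} Θ(H)(h ↦ ∑_{k ∈ K} χ(k) · x(h,k)), where the product runs over all characters χ of K; i.e., det (fun (g g' : G) => x (g * g'⁻¹)) = ∏_{χ : K →* ℂˣ (multiplicative characters of K)} det (fun (h h' : H) => ∑_{k ∈ K} χ(k) * x((h * h'⁻¹, k))). -/
open Matrix Finset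

lemma charSum_eq_zero {K : Type*} [CommGroup K] [Fintype K] {φ : K →* ℂˣ} (h : φ ≠ 1) :
    ∑ k, (φ k : ℂ) = 0 := by
  obtain ⟨k0, hk0⟩ : ∃ k0, φ k0 ≠ 1 := by
    by_contra h'; push_neg at h'
    exact h (MonoidHom.ext fun k => h' k)
  have h1 : (φ k0 : ℂ) * ∑ k, (φ k : ℂ) = ∑ k, (φ k : ℂ) := by
    rw [Finset.mul_sum]
    exact Fintype.sum_bijective _ (Equiv.mulLeft k0).bijective _ _
      (fun k => by simp [Equiv.mulLeft])
  have h2 : ((φ k0 : ℂ) - 1) * ∑ k, (φ k : ℂ) = 0 := by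
    rw [sub_mul, h1, one_mul, sub_self]
  rcases mul_eq_zero.mp h2 with h3 | h3
  · exact absurd (Units.ext (by push_cast; linear_combination h3)) hk0
  · exact h3

lemma charShift_sum {K : Type*} [CommGroup K] [Fintype K] (χ : K →* ℂˣ) (f : K → ℂ)
    (k : K) :
    ∑ k1, f (k * k1⁻¹) * (χ k1 : ℂ) = (χ k : ℂ) * ∑ k2, ((χ k2 : ℂ))⁻¹ * f k2 := by
  rw [Finset.mul_sum]
  refine Fintype.sum_bijective (fun k1 => k * k1⁻¹)
    (((Equiv.inv K).trans (Equiv.mulLeft k)).bijective) _ _ (fun k1 => ?_)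
  have hcoef : (χ k : ℂ) * ((χ (k * k1⁻¹) : ℂ))⁻¹ = (χ k1 : ℂ) := by
    rw [_root_.map_mul, map_inv, Units.val_mul, Units.val_inv_eq_inv_val]
    have := (χ k1).ne_zero
    have := (χ k).ne_zero
    field_simp
  rw [← hcoef]; ring


/-- Theorem 1 (factorization of the group determinant of a direct product
of finite abelian groups): for `G = H × K` and `x : G → ℂ`,
`Θ(G)(x) = ∏_{χ ∈ K̂} Θ(H)(h ↦ ∑_{k ∈ K} χ(k) x(h, k))`,
the product being over all characters `χ : K →* ℂˣ` of `K`
(a finite type, so the finitary product `∏ᶠ` is the full product). -/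
theorem groupDet_prod_factorization
    (H K : Type*) [CommGroup H] [Fintype H] [DecidableEq H]
    [CommGroup K] [Fintype K] [DecidableEq K]
    (x : H × K → ℂ) :
    Matrix.det (Matrix.of fun g g' : H × K => x (g * g'⁻¹)) =
      ∏ᶠ χ : K →* ℂˣ,
        Matrix.det (Matrix.of fun h h' : H =>
          ∑ k : K, (χ k : ℂ) * x (h * h'⁻¹, k)) := by
  classical
  have hexp : NeZero (Monoid.exponent K) := ⟨Monoid.exponent_ne_zero_of_finite⟩
  have : NeZero ((Monoid.exponent K : ℂ)) := ⟨Nat.cast_ne_zero.mpr hexp.1⟩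
  obtain ⟨e⟩ := CommGroup.monoidHom_mulEquiv_of_hasEnoughRootsOfUnity K ℂ
  letI : Fintype (K →* ℂˣ) := Fintype.ofEquiv K e.symm.toEquiv
  set M : Matrix (H × K) (H × K) ℂ := Matrix.of fun g g' => x (g * g'⁻¹) with hM
  set A : (K →* ℂˣ) → Matrix H H ℂ :=
    fun χ => Matrix.of fun h h' => ∑ k, ((χ k : ℂ))⁻¹ * x (h * h'⁻¹, k) with hA
  set W : Matrix (H × K) (H × K) ℂ :=
    Matrix.of fun p q => if p.1 = q.1 then ((e.symm q.2) p.2 : ℂ) else 0 with hW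
  set W' : Matrix (H × K) (H × K) ℂ :=
    Matrix.of fun p q => if p.1 = q.1 then (((e.symm p.2) q.2 : ℂ))⁻¹ else 0 with hW'
  set D : Matrix (H × K) (H × K) ℂ :=
    Matrix.blockDiagonal (fun k => A (e.symm k)) with hD
  -- W' * W = |K| • 1
  have hWW : W' * W = (Fintype.card K : ℂ) • 1 := by
    ext ⟨h, k⟩ ⟨h', k'⟩
    simp only [hW, hW', Matrix.mul_apply, Fintype.sum_prod_type, Matrix.of_apply,
      Matrix.smul_apply, Matrix.one_apply, smul_eq_mul]
    rw [Finset.sum_eq_single h]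
    · by_cases hh : h = h'
      · subst hh
        by_cases hk : k = k'
        · subst hk
          have h1 : ∀ k1 : K, ((e.symm k) k1 : ℂ)⁻¹ * ((e.symm k) k1 : ℂ) = 1 :=
            fun k1 => inv_mul_cancel₀ ((e.symm k) k1).ne_zero
          simp [h1, Prod.ext_iff]
        · have hne : (e.symm k)⁻¹ * e.symm k' ≠ 1 := fun hcon =>
            hk (e.symm.injective (inv_mul_eq_one.mp hcon))
          have key : ∑ k1 : K, ((e.symm k) k1 : ℂ)⁻¹ * ((e.symm k') k1 : ℂ) = 0 := by
            rw [← charSum_eq_zero hne]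
            exact Finset.sum_congr rfl fun k1 _ => by
              simp [Units.val_inv_eq_inv_val]
          simpa [Prod.ext_iff, hk] using key
      · simp [hh, Prod.ext_iff]
    · intro h1 _ hne
      simp [Ne.symm hne]
    · simp
  -- det W ≠ 0
  have hdetW : W.det ≠ 0 := by
    intro h0
    have hd : (W' * W).det = 0 := by rw [Matrix.det_mul, h0, mul_zero]
    rw [hWW, Matrix.det_smul, Matrix.det_one, mul_one] at hd
    exact pow_ne_zero _ (Nat.cast_ne_zero.mpr Fintype.card_ne_zero) hd
  -- M * W = W * D
  have hMW : M * W = W * D := by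
    ext ⟨h, k⟩ ⟨h', k'⟩
    simp only [hM, hW, hD, Matrix.mul_apply, Fintype.sum_prod_type, Matrix.of_apply,
      Matrix.blockDiagonal_apply]
    have hrhs : ∑ h1 : H, ∑ k1 : K,
        (if h = h1 then ((e.symm k1) k : ℂ) else 0) *
          (if k1 = k' then A (e.symm k1) h1 h' else 0) =
        ((e.symm k') k : ℂ) * A (e.symm k') h h' := by
      rw [Finset.sum_eq_single h]
      · rw [Finset.sum_eq_single k']
        · simp
        · intro k1 _ hne; simp [hne]
        · simp
      · intro h1 _ hne; simp [Ne.symm hne]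
      · simp
    have hlhs : ∑ h1 : H, ∑ k1 : K,
        x ((h, k) * (h1, k1)⁻¹) * (if h1 = h' then ((e.symm k') k1 : ℂ) else 0) =
        ∑ k1 : K, x (h * h'⁻¹, k * k1⁻¹) * ((e.symm k') k1 : ℂ) := by
      rw [Finset.sum_comm]
      refine Finset.sum_congr rfl fun k1 _ => ?_
      rw [Finset.sum_eq_single h']
      · simp [Prod.ext_iff]
      · intro h1 _ hne; simp [hne]
      · simp
    rw [hrhs, hlhs, charShift_sum (e.symm k') (fun k2 => x (h * h'⁻¹, k2)) k]
    rfl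
  -- conclude det M = det D
  have hdet : M.det = D.det := by
    have hd := congrArg Matrix.det hMW
    rw [Matrix.det_mul, Matrix.det_mul] at hd
    exact mul_right_cancel₀ hdetW (by rw [hd, mul_comm])
  rw [finprod_eq_prod_of_fintype]
  calc M.det = D.det := hdet
    _ = ∏ k : K, (A (e.symm k)).det := Matrix.det_blockDiagonal _
    _ = ∏ χ : K →* ℂˣ, (A χ).det :=
        Fintype.prod_equiv e.symm.toEquiv _ _ (fun k => rfl)
    _ = ∏ χ : K →* ℂˣ, Matrix.det (Matrix.of fun h h' : H =>
          ∑ k : K, (χ k : ℂ) * x (h * h'⁻¹, k)) := by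
        refine Fintype.prod_equiv (Equiv.inv (K →* ℂˣ)) _ _ (fun χ => ?_)
        congr 1
        ext h h'
        refine Finset.sum_congr rfl fun k _ => ?_
        simp [Units.val_inv_eq_inv_val]
end

section
/- (Dedekind's factorization for abelian groups.) Let G be a finite abelian group and x : G → ℂ. Then the group determinant factorizes into linear factors indexed by the characters of G: det (fun (g h : G) => x (g * h⁻¹)) = ∏_{χ ∈ Ĝ} ∑_{g ∈ G} χ(g) * x(g), where the product runs over all complex characters χ of G. -/
/-- Sum of a nontrivial character over a finite group vanishes. -/
private lemma sum_char_eq_zero {G : Type*} [CommGroup G] [Fintype G]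
    {χ : G →* ℂˣ} (h : χ ≠ 1) : ∑ g : G, (χ g : ℂ) = 0 := by
  obtain ⟨a, ha⟩ : ∃ a, χ a ≠ 1 := by
    by_contra hc
    push_neg at hc
    exact h (MonoidHom.ext fun g => by simp [hc g])
  have key : (χ a : ℂ) * ∑ g : G, (χ g : ℂ) = ∑ g : G, (χ g : ℂ) := by
    rw [Finset.mul_sum]
    exact Fintype.sum_equiv (Equiv.mulLeft a) _ _ (fun g => by
      rw [← Units.val_mul, ← map_mul]; rfl)
  have ha' : (χ a : ℂ) ≠ 1 := fun hc => ha (Units.ext hc)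
  have : ((χ a : ℂ) - 1) * ∑ g : G, (χ g : ℂ) = 0 := by
    rw [sub_mul, one_mul, key, sub_self]
  rcases mul_eq_zero.1 this with h' | h'
  · exact absurd (sub_eq_zero.1 h') ha'
  · exact h'

/-- The complex-unit characters of a finite abelian group are in bijection with the
complex-valued additive characters of `Additive G`. -/
private noncomputable def dualEquivAddChar (G : Type*) [CommGroup G] :
    (G →* ℂˣ) ≃ AddChar (Additive G) ℂ where
  toFun χ := AddChar.toMonoidHomEquiv.symm
    ((Units.coeHom ℂ).comp (χ.comp (MulEquiv.multiplicativeAdditive G).toMonoidHom))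
  invFun ψ := ((AddChar.toMonoidHomEquiv ψ).comp
    (MulEquiv.multiplicativeAdditive G).symm.toMonoidHom).toHomUnits
  left_inv χ := by
    ext g
    simp [MulEquiv.multiplicativeAdditive]
  right_inv ψ := by
    ext g
    simp [MulEquiv.multiplicativeAdditive]

/-- Dedekind's theorem for finite abelian groups: the group determinant
factorizes into linear factors indexed by the complex characters of `G`:
`det (x (g h⁻¹)) = ∏_{χ ∈ Ĝ} ∑_{g ∈ G} χ(g) x(g)`,
the product being over all characters `χ : G →* ℂˣ`
(a finite type, so the finitary product `∏ᶠ` is the full product). -/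
theorem dedekind_groupDet_factorization
    (G : Type*) [CommGroup G] [Fintype G] [DecidableEq G] (x : G → ℂ) :
    Matrix.det (Matrix.of fun g h : G => x (g * h⁻¹)) =
      ∏ᶠ χ : G →* ℂˣ, ∑ g : G, (χ g : ℂ) * x g := by
  classical
  haveI : Fintype (G →* ℂˣ) := Fintype.ofEquiv _ (dualEquivAddChar G).symm
  have hcard : Fintype.card (G →* ℂˣ) = Fintype.card G := by
    rw [Fintype.card_congr (dualEquivAddChar G), AddChar.card_eq]
    exact Fintype.card_congr Additive.toMul
  let e : G ≃ (G →* ℂˣ) := (Fintype.equivOfCardEq hcard).symm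
  set M : Matrix G G ℂ := Matrix.of fun g h : G => x (g * h⁻¹) with hM
  let U : Matrix G G ℂ := Matrix.of fun a g : G => (e a g : ℂ)
  let d : G → ℂ := fun a => ∑ g : G, (e a g : ℂ) * x g
  -- key eigen relation
  have hUM : U * M = Matrix.diagonal d * U := by
    ext a h
    rw [Matrix.mul_apply, Matrix.diagonal_mul]
    show (∑ g : G, (e a g : ℂ) * x (g * h⁻¹)) = d a * (e a h : ℂ)
    have : ∀ g : G, (e a g : ℂ) * x (g * h⁻¹)
        = (e a (g * h⁻¹) : ℂ) * x (g * h⁻¹) * (e a h : ℂ) := by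
      intro g
      have hg : (e a (g * h⁻¹) : ℂ) * (e a h : ℂ) = (e a g : ℂ) := by
        rw [← Units.val_mul, ← map_mul, inv_mul_cancel_right]
      rw [mul_comm ((e a (g * h⁻¹) : ℂ)) (x (g * h⁻¹)), mul_assoc, hg, mul_comm]
    rw [Finset.sum_congr rfl fun g _ => this g]
    rw [show d a * (e a h : ℂ) = ∑ g : G, (e a g : ℂ) * x g * (e a h : ℂ) by
      rw [Finset.sum_mul]]
    exact Fintype.sum_equiv (Equiv.mulRight h⁻¹) _ _ (fun g => rfl)
  -- invertibility of the character table
  let W : Matrix G G ℂ := Matrix.of fun g b : G => ((Fintype.card G : ℂ))⁻¹ * (e b g⁻¹ : ℂ)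
  have hUW : U * W = 1 := by
    ext a b
    rw [Matrix.mul_apply]
    have : ∀ g : G, U a g * W g b
        = (Fintype.card G : ℂ)⁻¹ * ((e a * (e b)⁻¹) g : ℂ) := by
      intro g
      show (e a g : ℂ) * ((Fintype.card G : ℂ)⁻¹ * (e b g⁻¹ : ℂ)) = _
      have : (e a g : ℂ) * (e b g⁻¹ : ℂ) = ((e a * (e b)⁻¹) g : ℂ) := by
        rw [← Units.val_mul]
        congr 1
        simp
      rw [← this]
      ring
    rw [Finset.sum_congr rfl fun g _ => this g, ← Finset.mul_sum]
    by_cases hab : a = b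
    · subst hab
      simp [Matrix.one_apply,
        Finset.card_univ, mul_inv_cancel₀ (Nat.cast_ne_zero.2 Fintype.card_ne_zero : (Fintype.card G : ℂ) ≠ 0)]
    · have hne : e a * (e b)⁻¹ ≠ 1 := by
        intro hc
        exact hab (e.injective (mul_inv_eq_one.mp hc))
      rw [sum_char_eq_zero hne, mul_zero, Matrix.one_apply_ne hab]
  have hdetU : U.det ≠ 0 := by
    have := congrArg Matrix.det hUW
    rw [Matrix.det_mul, Matrix.det_one] at this
    exact left_ne_zero_of_mul_eq_one this
  -- conclude
  have hdet : U.det * M.det = (∏ a : G, d a) * U.det := by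
    have := congrArg Matrix.det hUM
    rwa [Matrix.det_mul, Matrix.det_mul, Matrix.det_diagonal] at this
  have hMd : M.det = ∏ a : G, d a := by
    have : U.det * M.det = U.det * ∏ a : G, d a := by rw [hdet, mul_comm]
    exact mul_left_cancel₀ hdetU this
  rw [hM] at hMd
  rw [hMd, finprod_eq_prod_of_fintype]
  exact Fintype.prod_equiv e _ _ (fun a => rfl)
end

section
/- (Laquer's theorem.) Let n = r s with r and s relatively prime positive integers, let ζ_s be a primitive s-th root of unity in ℂ, and let x : ZMod n → ℂ (equivalently, complex numbers x_1, ..., x_n). Then the circulant determinant factorizes as C_n(x_1, ..., x_n) = ∏_{i = 0}^{s-1} C_r(y_1^i, ..., y_r^i), where for 1 ≤ j ≤ r one sets y_j^i := ∑_{k = 0}^{s-1} ζ_s^{i (k r + j - 1)} x_{k r + j} (indices of x taken modulo n). -/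
private lemma pow_mod_eq' {ω : ℂ} {n : ℕ} (h : ω ^ n = 1) (k : ℕ) : ω ^ (k % n) = ω ^ k := by
  conv_rhs => rw [← Nat.mod_add_div k n]
  rw [pow_add, pow_mul, h, one_pow, mul_one]

private lemma zmod_sum_range' {n : ℕ} [NeZero n] (f : ZMod n → ℂ) :
    ∑ c : ZMod n, f c = ∑ m ∈ Finset.range n, f ↑m :=
  Finset.sum_nbij' (fun c : ZMod n => c.val) (fun m : ℕ => (↑m : ZMod n))
    (fun c _ => Finset.mem_range.mpr (ZMod.val_lt c))
    (fun m _ => Finset.mem_univ _)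
    (fun c _ => ZMod.natCast_rightInverse c)
    (fun m hm => ZMod.val_cast_of_lt (Finset.mem_range.mp hm))
    (fun c _ => by rw [ZMod.natCast_rightInverse c])

private lemma zmod_prod_range' {n : ℕ} [NeZero n] (f : ZMod n → ℂ) :
    ∏ c : ZMod n, f c = ∏ m ∈ Finset.range n, f ↑m :=
  Finset.prod_nbij' (fun c : ZMod n => c.val) (fun m : ℕ => (↑m : ZMod n))
    (fun c _ => Finset.mem_range.mpr (ZMod.val_lt c))
    (fun m _ => Finset.mem_univ _)
    (fun c _ => ZMod.natCast_rightInverse c)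
    (fun m hm => ZMod.val_cast_of_lt (Finset.mem_range.mp hm))
    (fun c _ => by rw [ZMod.natCast_rightInverse c])

/-- Diagonalization of a circulant determinant by a primitive root of unity. -/
private lemma circ_det' {n : ℕ} [NeZero n] (ω : ℂ) (hω : IsPrimitiveRoot ω n)
    (x : ZMod n → ℂ) :
    (Matrix.of fun a b : ZMod n => x (a - b)).det =
      ∏ t : ZMod n, ∑ c : ZMod n, ω ^ (t.val * c.val) * x c := by
  obtain ⟨m, rfl⟩ : ∃ m, n = m + 1 :=
    ⟨n - 1, (Nat.succ_pred_eq_of_pos (Nat.pos_of_ne_zero (NeZero.ne n))).symm⟩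
  have hω1 : ω ^ (m + 1) = 1 := hω.pow_eq_one
  have e_add : ∀ a b : ZMod (m + 1), ω ^ (a + b).val = ω ^ a.val * ω ^ b.val := by
    intro a b
    rw [ZMod.val_add, pow_mod_eq' hω1, pow_add]
  set F : Matrix (ZMod (m + 1)) (ZMod (m + 1)) ℂ :=
    Matrix.of fun a t : ZMod (m + 1) => ω ^ (a * t).val with hF
  set D : Matrix (ZMod (m + 1)) (ZMod (m + 1)) ℂ :=
    Matrix.diagonal (fun t : ZMod (m + 1) => ∑ c : ZMod (m + 1), ω ^ (-(c * t)).val * x c) with hD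
  have key : (Matrix.of fun a b : ZMod (m + 1) => x (a - b)) * F = F * D := by
    ext a t
    rw [hD, Matrix.mul_diagonal, Matrix.mul_apply]
    rw [← Equiv.sum_comp (Equiv.subLeft a)
      (fun b => (Matrix.of fun a b : ZMod (m+1) => x (a - b)) a b * F b t)]
    simp only [Equiv.subLeft_apply, sub_sub_cancel, hF, Matrix.of_apply]
    rw [Finset.mul_sum]
    refine Finset.sum_congr rfl fun c _ => ?_
    have h1 : (a - c) * t = a * t + -(c * t) := by ring
    rw [h1, e_add]
    ring
  have hv : Function.Injective (fun i : Fin (m + 1) => ω ^ (i : ℕ)) := by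
    intro i j h
    exact Fin.ext (hω.pow_inj i.isLt j.isLt h)
  have hFdet : F.det ≠ 0 := by
    have hFv : F = Matrix.vandermonde (fun i : Fin (m + 1) => ω ^ (i : ℕ)) := by
      ext a t
      simp only [hF, Matrix.of_apply, Matrix.vandermonde_apply]
      rw [ZMod.val_mul, pow_mod_eq' hω1, pow_mul]
      rfl
    rw [hFv]
    exact Matrix.det_vandermonde_ne_zero_iff.mpr hv
  have hdet := congrArg Matrix.det key
  rw [Matrix.det_mul, Matrix.det_mul] at hdet
  have hM : (Matrix.of fun a b : ZMod (m + 1) => x (a - b)).det = D.det :=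
    mul_right_cancel₀ hFdet (hdet.trans (mul_comm _ _))
  rw [hM, hD, Matrix.det_diagonal]
  rw [← Equiv.prod_comp (Equiv.neg (ZMod (m + 1)))
    (fun t => ∑ c : ZMod (m + 1), ω ^ (-(c * t)).val * x c)]
  refine Finset.prod_congr rfl fun t _ => Finset.sum_congr rfl fun c _ => ?_
  have h2 : -(c * (Equiv.neg (ZMod (m+1)) t)) = c * t := by
    simp [Equiv.neg_apply]
  rw [h2, ZMod.val_mul, pow_mod_eq' hω1, Nat.mul_comm c.val t.val]

private lemma laquer_inner_sum {n r s : ℕ} [NeZero n] (hr : 0 < r) (hn : n = r * s)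
    (ξ ζ : ℂ) (hξ1 : ξ ^ r = 1) (x : ZMod n → ℂ) (u i : ℕ) :
    ∑ j ∈ Finset.range r, ∑ k ∈ Finset.range s,
        ξ ^ (u * j) * (ζ ^ (i * (k * r + j)) * x ↑(k * r + j))
      = ∑ m ∈ Finset.range n, (ξ ^ u * ζ ^ i) ^ m * x ↑m := by
  rw [← Finset.sum_product']
  refine Finset.sum_nbij' (fun p : ℕ × ℕ => p.2 * r + p.1) (fun m => (m % r, m / r))
    ?_ ?_ ?_ ?_ ?_
  · rintro ⟨j, k⟩ hp
    simp only [Finset.mem_product, Finset.mem_range] at hp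
    simp only [Finset.mem_range, hn]
    calc k * r + j < k * r + r := by omega
      _ = (k + 1) * r := by ring
      _ ≤ s * r := Nat.mul_le_mul_right r hp.2
      _ = r * s := Nat.mul_comm s r
  · intro m hm
    simp only [Finset.mem_range, hn] at hm
    simp only [Finset.mem_product, Finset.mem_range]
    exact ⟨Nat.mod_lt _ hr, (Nat.div_lt_iff_lt_mul hr).mpr (by rw [Nat.mul_comm s r]; omega)⟩
  · rintro ⟨j, k⟩ hp
    simp only [Finset.mem_product, Finset.mem_range] at hp
    have h1 : (k * r + j) % r = j := by
      rw [Nat.mul_comm k r, Nat.mul_add_mod, Nat.mod_eq_of_lt hp.1]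
    have h2 : (k * r + j) / r = k := by
      rw [Nat.mul_comm k r, Nat.mul_add_div hr, Nat.div_eq_of_lt hp.1, Nat.add_zero]
    simp [h1, h2]
  · intro m _
    simpa using Nat.div_add_mod' m r
  · rintro ⟨j, k⟩ hp
    simp only [Finset.mem_product, Finset.mem_range] at hp
    simp only []
    have hx1 : ξ ^ (u * (k * r + j)) = ξ ^ (u * j) := by
      have h3 : u * (k * r + j) = (u * k) * r + u * j := by ring
      rw [h3, pow_add, Nat.mul_comm (u * k) r, pow_mul, hξ1, one_pow, one_mul]
    rw [mul_pow, ← pow_mul, ← pow_mul, hx1]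
    ring

private lemma laquer_outer {n r s : ℕ} (hr : 0 < r) (hs : 0 < s) (hn : n = r * s)
    (hrs : Nat.Coprime r s) (ξ ζ : ℂ) (hξ1 : ξ ^ r = 1) (hζ1 : ζ ^ s = 1)
    (Q : ℂ → ℂ) :
    ∏ m ∈ Finset.range n, Q ((ξ * ζ) ^ m)
      = ∏ i ∈ Finset.range s, ∏ j ∈ Finset.range r, Q (ξ ^ j * ζ ^ i) := by
  have hn0 : 0 < n := hn ▸ Nat.mul_pos hr hs
  rw [← Finset.prod_product']
  refine Finset.prod_bij (fun m _ => ((m % s, m % r) : ℕ × ℕ)) ?_ ?_ ?_ ?_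
  · intro m _
    simp only [Finset.mem_product, Finset.mem_range]
    exact ⟨Nat.mod_lt _ hs, Nat.mod_lt _ hr⟩
  · intro a ha b hb hab
    simp only [Prod.mk.injEq] at hab
    have h1 : a ≡ b [MOD r * s] :=
      (Nat.modEq_and_modEq_iff_modEq_mul hrs).mp ⟨hab.2, hab.1⟩
    simp only [Finset.mem_range, hn] at ha hb
    unfold Nat.ModEq at h1
    rw [Nat.mod_eq_of_lt ha, Nat.mod_eq_of_lt hb] at h1
    exact h1
  · rintro ⟨i, j⟩ hp
    simp only [Finset.mem_product, Finset.mem_range] at hp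
    obtain ⟨k, hk1, hk2⟩ := Nat.chineseRemainder hrs j i
    refine ⟨k % n, Finset.mem_range.mpr (Nat.mod_lt _ hn0), ?_⟩
    have hrn : r ∣ n := hn ▸ Dvd.intro s rfl
    have hsn : s ∣ n := hn ▸ Dvd.intro_left r rfl
    have h1 : k % n % r = j := by
      rw [Nat.mod_mod_of_dvd k hrn]
      unfold Nat.ModEq at hk1
      rw [hk1, Nat.mod_eq_of_lt hp.2]
    have h2 : k % n % s = i := by
      rw [Nat.mod_mod_of_dvd k hsn]
      unfold Nat.ModEq at hk2
      rw [hk2, Nat.mod_eq_of_lt hp.1]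
    simp [h1, h2]
  · intro m _
    simp only []
    congr 1
    rw [mul_pow, pow_mod_eq' hξ1, pow_mod_eq' hζ1]

/-- Laquer's theorem: for `n = r * s` with `r, s` coprime positive integers and
`ζ` a primitive `s`-th root of unity in `ℂ`, the circulant determinant
`C_n(x₁, …, xₙ)` (here the group determinant of `ℤ/nℤ`, with 0-based indexing
`x : ZMod n → ℂ`, matrix entry `x (a - b)`) factorizes as
`∏_{i=0}^{s-1} C_r(y₁ⁱ, …, y_rⁱ)` where, 0-based,
`yⁱ_j = ∑_{k=0}^{s-1} ζ^(i (k r + j)) x_{k r + j}` for `0 ≤ j ≤ r - 1`. -/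
theorem laquer_circulant_factorization
    (n r s : ℕ) [NeZero n] [NeZero r] (hr : 0 < r) (hs : 0 < s) (hn : n = r * s)
    (hrs : Nat.Coprime r s) (ζ : ℂ) (hζ : IsPrimitiveRoot ζ s)
    (x : ZMod n → ℂ) :
    Matrix.det (Matrix.of fun a b : ZMod n => x (a - b)) =
      ∏ i ∈ Finset.range s,
        Matrix.det (Matrix.of fun a b : ZMod r =>
          ∑ k ∈ Finset.range s,
            ζ ^ (i * (k * r + (a - b : ZMod r).val)) *
              x ((k * r + (a - b : ZMod r).val : ℕ) : ZMod n)) := by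
  obtain ⟨ξ, hξ⟩ : ∃ ξ : ℂ, IsPrimitiveRoot ξ r := ⟨_, Complex.isPrimitiveRoot_exp r hr.ne'⟩
  have hξ1 : ξ ^ r = 1 := hξ.pow_eq_one
  have hζ1 : ζ ^ s = 1 := hζ.pow_eq_one
  have hω : IsPrimitiveRoot (ξ * ζ) n := by
    have hco : (orderOf ξ).Coprime (orderOf ζ) := by
      rw [← hξ.eq_orderOf, ← hζ.eq_orderOf]; exact hrs
    have hord := (Commute.all ξ ζ).orderOf_mul_eq_mul_orderOf_of_coprime hco
    rw [← hξ.eq_orderOf, ← hζ.eq_orderOf] at hord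
    rw [hn, ← hord]
    exact IsPrimitiveRoot.orderOf _
  have hR : ∀ i ∈ Finset.range s,
      Matrix.det (Matrix.of fun a b : ZMod r =>
        ∑ k ∈ Finset.range s, ζ ^ (i * (k * r + (a - b : ZMod r).val)) *
          x ((k * r + (a - b : ZMod r).val : ℕ) : ZMod n))
      = ∏ j ∈ Finset.range r, ∑ m' ∈ Finset.range n, (ξ ^ j * ζ ^ i) ^ m' * x ↑m' := by
    intro i _
    have h1 := circ_det' ξ hξ (fun d : ZMod r =>
      ∑ k ∈ Finset.range s, ζ ^ (i * (k * r + d.val)) * x ((k * r + d.val : ℕ) : ZMod n))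
    calc Matrix.det (Matrix.of fun a b : ZMod r =>
            ∑ k ∈ Finset.range s, ζ ^ (i * (k * r + (a - b : ZMod r).val)) *
              x ((k * r + (a - b : ZMod r).val : ℕ) : ZMod n))
        = ∏ t : ZMod r, ∑ c : ZMod r, ξ ^ (t.val * c.val) *
            ∑ k ∈ Finset.range s, ζ ^ (i * (k * r + c.val)) *
              x ((k * r + c.val : ℕ) : ZMod n) := h1
      _ = ∏ j ∈ Finset.range r, ∑ m' ∈ Finset.range n, (ξ ^ j * ζ ^ i) ^ m' * x ↑m' := ?_
    rw [zmod_prod_range' (fun t : ZMod r => ∑ c : ZMod r, ξ ^ (t.val * c.val) *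
      ∑ k ∈ Finset.range s, ζ ^ (i * (k * r + c.val)) * x ((k * r + c.val : ℕ) : ZMod n))]
    refine Finset.prod_congr rfl fun u hu => ?_
    rw [zmod_sum_range' (fun c : ZMod r => ξ ^ (((u : ℕ) : ZMod r).val * c.val) *
      ∑ k ∈ Finset.range s, ζ ^ (i * (k * r + c.val)) * x ((k * r + c.val : ℕ) : ZMod n))]
    rw [← laquer_inner_sum hr hn ξ ζ hξ1 x u i]
    refine Finset.sum_congr rfl fun j hj => ?_
    rw [ZMod.val_cast_of_lt (Finset.mem_range.mp hu),
      ZMod.val_cast_of_lt (Finset.mem_range.mp hj), Finset.mul_sum]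
  rw [circ_det' (ξ * ζ) hω x]
  calc (∏ t : ZMod n, ∑ c : ZMod n, (ξ * ζ) ^ (t.val * c.val) * x c)
      = ∏ m ∈ Finset.range n, ∑ m' ∈ Finset.range n, ((ξ * ζ) ^ m) ^ m' * x ↑m' := by
        rw [zmod_prod_range' (fun t : ZMod n => ∑ c : ZMod n, (ξ * ζ) ^ (t.val * c.val) * x c)]
        refine Finset.prod_congr rfl fun m hm => ?_
        rw [zmod_sum_range' (fun c : ZMod n => (ξ * ζ) ^ (((m : ℕ) : ZMod n).val * c.val) * x c)]
        refine Finset.sum_congr rfl fun m' hm' => ?_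
        rw [ZMod.val_cast_of_lt (Finset.mem_range.mp hm),
          ZMod.val_cast_of_lt (Finset.mem_range.mp hm'), pow_mul]
    _ = ∏ i ∈ Finset.range s, ∏ j ∈ Finset.range r,
          ∑ m' ∈ Finset.range n, (ξ ^ j * ζ ^ i) ^ m' * x ↑m' :=
        laquer_outer hr hs hn hrs ξ ζ hξ1 hζ1 (fun z => ∑ m' ∈ Finset.range n, z ^ m' * x ↑m')
    _ = ∏ i ∈ Finset.range s,
        Matrix.det (Matrix.of fun a b : ZMod r =>
          ∑ k ∈ Finset.range s,
            ζ ^ (i * (k * r + (a - b : ZMod r).val)) *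
              x ((k * r + (a - b : ZMod r).val : ℕ) : ZMod n)) :=
        Finset.prod_congr rfl fun i hi => (hR i hi).symm
end

section
/- Let G = H × (ℤ/2ℤ)^l with H a finite abelian group and l a natural number. Suppose M is a natural number such that 2^M divides every even integer group determinant of H (i.e., 2^M divides every element of S(H)_even), M being the maximal such exponent. Then every even integer group determinant of G is divisible by 2^{M · 2^l}; that is, S(G)_even ⊆ 2^{M · 2^l} ℤ. -/
/-- The integer group determinant of `x : G → ℤ`. -/
def intGroupDet (G : Type*) [Group G] [Fintype G] [DecidableEq G] (x : G → ℤ) : ℤ :=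
  Matrix.det (Matrix.of fun g h : G => x (g * h⁻¹))

/-- `S(G)`: the set of all integer group determinants of `G`. -/
def detSet (G : Type*) [Group G] [Fintype G] [DecidableEq G] : Set ℤ :=
  {d : ℤ | ∃ x : G → ℤ, d = intGroupDet G x}

/-- `S(G)_even = S(G) ∩ 2ℤ`. -/
def detSetEven (G : Type*) [Group G] [Fintype G] [DecidableEq G] : Set ℤ :=
  detSet G ∩ {d : ℤ | 2 ∣ d}

/- ----------  auxiliary lemmas ---------- -/

lemma aux_intGroupDet_congr {K K' : Type*} [Group K] [Fintype K] [DecidableEq K]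
    [Group K'] [Fintype K'] [DecidableEq K'] (e : K ≃* K') (x : K' → ℤ) :
    intGroupDet K' x = intGroupDet K (x ∘ e) := by
  unfold intGroupDet
  rw [← Matrix.det_submatrix_equiv_self e.toEquiv]
  congr 1
  ext g h
  simp [Matrix.submatrix_apply, map_mul]

lemma aux_detSetEven_congr {K K' : Type*} [Group K] [Fintype K] [DecidableEq K]
    [Group K'] [Fintype K'] [DecidableEq K'] (e : K ≃* K') :
    detSetEven K' ⊆ detSetEven K := by
  rintro d ⟨⟨x, rfl⟩, hev⟩
  exact ⟨⟨x ∘ e, aux_intGroupDet_congr e x⟩, hev⟩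

open Matrix in
lemma aux_det_fromBlocks_comm {m R : Type*} [Fintype m] [DecidableEq m] [CommRing R]
    (A B : Matrix m m R) :
    (Matrix.fromBlocks A B B A).det = (A + B).det * (A - B).det := by
  have h : Matrix.fromBlocks (1 : Matrix m m R) 1 0 1 * Matrix.fromBlocks A B B A *
      Matrix.fromBlocks 1 (-1) 0 1 = Matrix.fromBlocks (A + B) 0 B (A - B) := by
    rw [Matrix.fromBlocks_multiply, Matrix.fromBlocks_multiply, Matrix.fromBlocks_inj]
    refine ⟨?_, ?_, ?_, ?_⟩ <;>
      simp only [Matrix.one_mul, Matrix.mul_one, Matrix.zero_mul, Matrix.mul_zero,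
        Matrix.mul_neg, Matrix.neg_mul, add_zero, zero_add] <;> abel
  have hd := congrArg Matrix.det h
  rw [Matrix.det_mul, Matrix.det_mul, Matrix.det_fromBlocks_zero₂₁,
    Matrix.det_fromBlocks_zero₂₁, Matrix.det_fromBlocks_zero₁₂] at hd
  simpa using hd

/-- Doubling step: group determinants of `K × C₂` factor as a product of two
group determinants of `K` which are congruent mod 2. -/
lemma aux_step (K : Type*) [Group K] [Fintype K] [DecidableEq K] (M : ℕ)
    (hM : ∀ d ∈ detSetEven K, (2 : ℤ) ^ M ∣ d) :
    ∀ d ∈ detSetEven (K × Multiplicative (ZMod 2)), (2 : ℤ) ^ (2 * M) ∣ d := by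
  rintro d ⟨⟨x, rfl⟩, hev⟩
  set a : K → ℤ := fun k => x (k, Multiplicative.ofAdd 0) with ha
  set b : K → ℤ := fun k => x (k, Multiplicative.ofAdd 1) with hb
  -- the index equivalence
  have hz : ∀ z : ZMod 2, z = 0 ∨ z = 1 := by decide
  let e : K ⊕ K ≃ K × Multiplicative (ZMod 2) :=
  { toFun := Sum.elim (fun k => (k, Multiplicative.ofAdd 0))
      (fun k => (k, Multiplicative.ofAdd 1))
    invFun := fun p => if p.2 = Multiplicative.ofAdd 0 then Sum.inl p.1 else Sum.inr p.1
    left_inv := by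
      rintro (k | k) <;> simp
    right_inv := by
      rintro ⟨k, z⟩
      rcases hz z.toAdd with h | h <;>
        [ (have : z = Multiplicative.ofAdd 0 := h; subst this; simp);
          (have : z = Multiplicative.ofAdd 1 := h; subst this; simp)] }
  have hpt : ∀ (g h : K) (u v w : ZMod 2),
      Multiplicative.ofAdd u * (Multiplicative.ofAdd v)⁻¹ = Multiplicative.ofAdd w →
      ((g, Multiplicative.ofAdd u) * (h, Multiplicative.ofAdd v)⁻¹ :
        K × Multiplicative (ZMod 2)) = (g * h⁻¹, Multiplicative.ofAdd w) := by
    intro g h u v w hw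
    rw [Prod.inv_mk, Prod.mk_mul_mk, hw]
  have key : intGroupDet (K × Multiplicative (ZMod 2)) x
      = intGroupDet K (a + b) * intGroupDet K (a - b) := by
    unfold intGroupDet
    rw [← Matrix.det_submatrix_equiv_self e]
    have hsub : (Matrix.of fun g h : K × Multiplicative (ZMod 2) => x (g * h⁻¹)).submatrix e e
        = Matrix.fromBlocks (Matrix.of fun g h : K => a (g * h⁻¹))
            (Matrix.of fun g h : K => b (g * h⁻¹))
            (Matrix.of fun g h : K => b (g * h⁻¹))
            (Matrix.of fun g h : K => a (g * h⁻¹)) := by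
      ext (g | g) (h | h) <;>
        simp only [Matrix.submatrix_apply, Matrix.of_apply, Matrix.fromBlocks_apply₁₁,
          Matrix.fromBlocks_apply₁₂, Matrix.fromBlocks_apply₂₁, Matrix.fromBlocks_apply₂₂,
          Sum.elim_inl, Sum.elim_inr, e, Equiv.coe_fn_mk, ha, hb]
      · rw [hpt g h 0 0 0 (by decide)]
      · rw [hpt g h 0 1 1 (by decide)]
      · rw [hpt g h 1 0 1 (by decide)]
      · rw [hpt g h 1 1 0 (by decide)]
    rw [hsub, aux_det_fromBlocks_comm]
    rfl
  -- the two factors are congruent mod 2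
  have hcast : ∀ y : K → ℤ, ((intGroupDet K y : ℤ) : ZMod 2)
      = (Matrix.of fun g h : K => ((y (g * h⁻¹) : ℤ) : ZMod 2)).det := by
    intro y
    exact RingHom.map_det (Int.castRingHom (ZMod 2)) _
  have hcong : (2 : ℤ) ∣ intGroupDet K (a + b) - intGroupDet K (a - b) := by
    have hzmod : ((intGroupDet K (a + b) : ℤ) : ZMod 2)
        = ((intGroupDet K (a - b) : ℤ) : ZMod 2) := by
      rw [hcast, hcast]
      congr 1
      ext g h
      have h2 : ∀ t : ZMod 2, t = -t := by decide
      simp only [Matrix.of_apply, Pi.add_apply, Pi.sub_apply, Int.cast_add, Int.cast_sub]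
      rw [sub_eq_add_neg, ← h2]
    have := (ZMod.intCast_zmod_eq_zero_iff_dvd
      (intGroupDet K (a + b) - intGroupDet K (a - b)) 2).mp (by push_cast; rw [hzmod]; ring)
    exact_mod_cast this
  -- both factors are even
  rw [key] at hev ⊢
  have h2 : Prime (2 : ℤ) := Int.prime_two
  have hboth : (2 : ℤ) ∣ intGroupDet K (a + b) ∧ (2 : ℤ) ∣ intGroupDet K (a - b) := by
    rcases h2.dvd_mul.mp hev with h | h
    · exact ⟨h, by have := dvd_sub h hcong; simpa using this⟩
    · exact ⟨by have := dvd_add h hcong; simpa using this, h⟩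
  have hd1 : (2 : ℤ) ^ M ∣ intGroupDet K (a + b) :=
    hM _ ⟨⟨a + b, rfl⟩, hboth.1⟩
  have hd2 : (2 : ℤ) ^ M ∣ intGroupDet K (a - b) :=
    hM _ ⟨⟨a - b, rfl⟩, hboth.2⟩
  calc (2 : ℤ) ^ (2 * M) = 2 ^ M * 2 ^ M := by rw [two_mul, pow_add]
  _ ∣ _ := mul_dvd_mul hd1 hd2

/-- `Fin (l+1) → ZMod 2` splits off one factor, additively. -/
def auxAddEquiv (l : ℕ) : (Fin (l + 1) → ZMod 2) ≃+ (ZMod 2) × (Fin l → ZMod 2) :=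
  AddEquiv.mk' (Fin.consEquiv (fun _ : Fin (l + 1) => ZMod 2)).symm (fun f g => rfl)

def auxMulEquiv (H : Type*) [CommGroup H] (l : ℕ) :
    H × Multiplicative (Fin (l + 1) → ZMod 2) ≃*
      (H × Multiplicative (Fin l → ZMod 2)) × Multiplicative (ZMod 2) :=
  ((MulEquiv.refl H).prodCongr
      ((AddEquiv.toMultiplicative (auxAddEquiv l)).trans
        ((MulEquiv.prodMultiplicative (ZMod 2) (Fin l → ZMod 2)).trans
          MulEquiv.prodComm))).trans
    MulEquiv.prodAssoc.symm

/-- Theorem 2: let `G = H × (ℤ/2ℤ)^l` with `H` a finite abelian group, and let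
`M = max { m ∈ ℕ | 2^m divides every element of S(H)_even }`.
Then `S(G)_even ⊆ 2^(M · 2^l) ℤ`. -/
theorem detSetEven_prod_subset
    (H : Type*) [CommGroup H] [Fintype H] [DecidableEq H] (l : ℕ) (M : ℕ)
    (hM : ∀ d ∈ detSetEven H, (2 : ℤ) ^ M ∣ d)
    (hMmax : ∀ m : ℕ, (∀ d ∈ detSetEven H, (2 : ℤ) ^ m ∣ d) → m ≤ M) :
    ∀ d ∈ detSetEven (H × Multiplicative (Fin l → ZMod 2)),
      (2 : ℤ) ^ (M * 2 ^ l) ∣ d := by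
  induction l with
  | zero =>
    intro d hd
    have := aux_detSetEven_congr (MulEquiv.prodUnique :
      H × Multiplicative (Fin 0 → ZMod 2) ≃* H).symm hd
    simpa using hM d this
  | succ l ih =>
    intro d hd
    have hd' : d ∈ detSetEven ((H × Multiplicative (Fin l → ZMod 2)) ×
        Multiplicative (ZMod 2)) := aux_detSetEven_congr (auxMulEquiv H l).symm hd
    have := aux_step _ (M * 2 ^ l) ih d hd'
    have harith : M * 2 ^ (l + 1) = 2 * (M * 2 ^ l) := by ring
    rwa [harith]
end

section
/- It suffices to assume divisibility rather than maximality: let G = H × (ℤ/2ℤ)^l with H a finite abelian group, l ∈ ℕ, and let M ∈ ℕ be such that 2^M divides every element of S(H)_even. If x : G → ℤ and the integer group determinant Θ(G)(x) is even, then 2^{M · 2^l} divides Θ(G)(x). -/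
/-!
Splitting `G × C₂` into the cosets of `G` turns the group matrix of `x` into the block matrix
`[[A, B], [B, A]]`, whose determinant is `det (A + B) * det (A - B)`: both factors are group
determinants of `G`, and they are congruent mod 2. So if their product is even, both factors are,
and the power of 2 guaranteed for even determinants of `G` doubles. Induction on `l` gives
`M * 2 ^ l`.
-/

theorem Matrix.det_fromBlocks_eq_det_add_mul_det_sub {n R : Type*} [CommRing R] [DecidableEq n]
    [Fintype n] (A B : Matrix n n R) :
    (fromBlocks A B B A).det = (A + B).det * (A - B).det := by
  have h : fromBlocks 1 1 0 1 * fromBlocks A B B A * fromBlocks 1 (-1) 0 1 =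
      fromBlocks (A + B) 0 B (A - B) := by
    simp only [fromBlocks_multiply, one_mul, mul_one, mul_zero, add_zero, mul_neg, neg_add_rev,
      zero_mul, zero_add, fromBlocks_inj, true_and]
    constructor <;> abel
  simpa [det_fromBlocks_zero₁₂, det_fromBlocks_zero₂₁] using congrArg det h

theorem Int.two_dvd_of_two_dvd_mul_of_modEq {a b : ℤ} (hab : a ≡ b [ZMOD 2]) (h : 2 ∣ a * b) :
    2 ∣ a := by
  rcases Int.prime_two.dvd_or_dvd h with ha | hb
  · exact ha
  · unfold Int.ModEq at hab
    omega

def MulEquiv.prodMultiplicativePiFinSucc (H A : Type*) [Group H] [AddCommMonoid A] (l : ℕ) :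
    (H × Multiplicative (Fin l → A)) × Multiplicative A ≃* H × Multiplicative (Fin (l + 1) → A) :=
  MulEquiv.prodAssoc.trans <| MulEquiv.prodCongr (MulEquiv.refl H) <|
    MulEquiv.prodComm.trans <| (MulEquiv.prodMultiplicative A (Fin l → A)).symm.trans
      (Fin.consLinearEquiv ℕ fun _ => A).toAddEquiv.toMultiplicative

section

variable {G G' : Type*} [Group G] [Fintype G] [DecidableEq G]
  [Group G'] [Fintype G'] [DecidableEq G']

theorem intGroupDet_comp_mulEquiv (e : G ≃* G') (x : G' → ℤ) :
    intGroupDet G (x ∘ e) = intGroupDet G' x := by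
  rw [intGroupDet, intGroupDet, ← Matrix.det_submatrix_equiv_self e.toEquiv]
  congr 1
  ext g h
  simp

theorem detSet_congr (e : G ≃* G') : detSet G = detSet G' := by
  ext d
  constructor
  · rintro ⟨x, rfl⟩
    refine ⟨x ∘ e.symm, ?_⟩
    rw [← intGroupDet_comp_mulEquiv e, Function.comp_assoc, e.symm_comp_self, Function.comp_id]
  · rintro ⟨x, rfl⟩
    exact ⟨x ∘ e, (intGroupDet_comp_mulEquiv e x).symm⟩

theorem detSetEven_congr (e : G ≃* G') : detSetEven G = detSetEven G' := by
  rw [detSetEven, detSetEven, detSet_congr e]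

theorem intGroupDet_modEq {n : ℕ} {x y : G → ℤ} (h : ∀ g, x g ≡ y g [ZMOD n]) :
    intGroupDet G x ≡ intGroupDet G y [ZMOD n] := by
  simp_rw [← ZMod.intCast_eq_intCast_iff] at h ⊢
  simp only [intGroupDet, ← Int.coe_castRingHom, RingHom.map_det]
  congr 1
  ext g h'
  simpa using h (g * h'⁻¹)

theorem intGroupDet_prod_multiplicative_zmod_two (x : G × Multiplicative (ZMod 2) → ℤ) :
    intGroupDet (G × Multiplicative (ZMod 2)) x =
      intGroupDet G (fun g => x (g, 1) + x (g, .ofAdd 1)) *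
        intGroupDet G (fun g => x (g, 1) - x (g, .ofAdd 1)) := by
  let e : G ⊕ G ≃ G × Multiplicative (ZMod 2) :=
    (Equiv.boolProdEquivSum G).symm.trans <| (Equiv.prodComm _ _).trans <|
      (Equiv.refl G).prodCongr (finTwoEquiv.symm.trans Multiplicative.ofAdd)
  let A : Matrix G G ℤ := .of fun g h => x (g * h⁻¹, 1)
  let B : Matrix G G ℤ := .of fun g h => x (g * h⁻¹, .ofAdd 1)
  have hblocks : (Matrix.of fun p q => x (p * q⁻¹)).submatrix e e = .fromBlocks A B B A := by
    ext (i | i) (j | j) <;> simp [A, B, e, Prod.mul_def] <;> rfl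
  calc intGroupDet (G × Multiplicative (ZMod 2)) x
      = (Matrix.fromBlocks A B B A).det := by
        rw [intGroupDet, ← Matrix.det_submatrix_equiv_self e, hblocks]
    _ = (A + B).det * (A - B).det := Matrix.det_fromBlocks_eq_det_add_mul_det_sub A B
    _ = _ := by congr 1

theorem pow_two_mul_dvd_of_mem_detSetEven_prod {m : ℕ}
    (hG : ∀ d ∈ detSetEven G, (2 : ℤ) ^ m ∣ d) :
    ∀ d ∈ detSetEven (G × Multiplicative (ZMod 2)), (2 : ℤ) ^ (2 * m) ∣ d := by
  rintro _ ⟨⟨x, rfl⟩, heven⟩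
  rw [Set.mem_ofPred_eq, intGroupDet_prod_multiplicative_zmod_two] at heven
  rw [intGroupDet_prod_multiplicative_zmod_two]
  set dAdd := intGroupDet G fun g => x (g, 1) + x (g, .ofAdd 1)
  set dSub := intGroupDet G fun g => x (g, 1) - x (g, .ofAdd 1)
  have hmod : dAdd ≡ dSub [ZMOD 2] := intGroupDet_modEq fun g => by
    simp only [Int.ModEq, Nat.cast_ofNat]
    omega
  have hAdd : 2 ∣ dAdd := Int.two_dvd_of_two_dvd_mul_of_modEq hmod heven
  have hSub : 2 ∣ dSub := Int.two_dvd_of_two_dvd_mul_of_modEq hmod.symm (mul_comm dAdd dSub ▸ heven)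
  rw [two_mul, pow_add]
  exact mul_dvd_mul (hG dAdd ⟨⟨_, rfl⟩, hAdd⟩) (hG dSub ⟨⟨_, rfl⟩, hSub⟩)

end

theorem pow_mul_two_pow_dvd_of_mem_detSetEven_prod_pi {H : Type*} [Group H] [Fintype H]
    [DecidableEq H] {M : ℕ} (hM : ∀ d ∈ detSetEven H, (2 : ℤ) ^ M ∣ d) (l : ℕ) :
    ∀ d ∈ detSetEven (H × Multiplicative (Fin l → ZMod 2)), (2 : ℤ) ^ (M * 2 ^ l) ∣ d := by
  induction l with
  | zero => rwa [← detSetEven_congr MulEquiv.prodUnique.symm, pow_zero, mul_one]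
  | succ l ih =>
    rw [← detSetEven_congr (MulEquiv.prodMultiplicativePiFinSucc H (ZMod 2) l), pow_succ,
      ← mul_assoc, mul_comm _ 2]
    exact pow_two_mul_dvd_of_mem_detSetEven_prod ih

/-- Divisibility suffices (no maximality needed): let `G = H × (ℤ/2ℤ)^l` with
`H` a finite abelian group and `M ∈ ℕ` such that `2^M` divides every element of
`S(H)_even`. If `x : G → ℤ` and `Θ(G)(x)` is even, then
`2^(M · 2^l) ∣ Θ(G)(x)`. -/
theorem pow_two_dvd_intGroupDet_of_even
    (H : Type*) [CommGroup H] [Fintype H] [DecidableEq H] (l : ℕ) (M : ℕ)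
    (hM : ∀ d ∈ detSetEven H, (2 : ℤ) ^ M ∣ d)
    (x : H × Multiplicative (Fin l → ZMod 2) → ℤ)
    (heven : 2 ∣ intGroupDet (H × Multiplicative (Fin l → ZMod 2)) x) :
    (2 : ℤ) ^ (M * 2 ^ l) ∣ intGroupDet (H × Multiplicative (Fin l → ZMod 2)) x :=
  pow_mul_two_pow_dvd_of_mem_detSetEven_prod_pi hM l _ ⟨⟨x, rfl⟩, heven⟩
end

section
/- For every n ≥ 2 and for G = (ℤ/2ℤ)^n, every even integer group determinant of G is divisible by 2^{2^n}; that is, S((ℤ/2ℤ)^n)_even ⊆ 2^{2^n} ℤ. -/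
open Finset

namespace Cor3Aux

variable {n : ℕ}

/-- character indexed by `s`, evaluated at `g`. -/
def χ (n : ℕ) (s g : Fin n → ZMod 2) : ℤ := ∏ i, (-1 : ℤ) ^ (s i * g i).val

lemma aux_add : ∀ a b c : ZMod 2,
    (-1 : ℤ) ^ (a * (b + c)).val = (-1:ℤ)^(a*b).val * (-1:ℤ)^(a*c).val := by decide

lemma aux_add_left : ∀ a b c : ZMod 2,
    (-1 : ℤ) ^ ((a + b) * c).val = (-1:ℤ)^(a*c).val * (-1:ℤ)^(b*c).val := by decide

lemma neg_self (g : Fin n → ZMod 2) : -g = g := by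
  funext i; revert g; intro g; exact (by decide : ∀ x : ZMod 2, -x = x) (g i)

lemma χ_add (s g h : Fin n → ZMod 2) : χ n s (g + h) = χ n s g * χ n s h := by
  unfold χ
  rw [← Finset.prod_mul_distrib]
  exact Finset.prod_congr rfl fun i _ => aux_add _ _ _

lemma χ_mul (s t g : Fin n → ZMod 2) : χ n s g * χ n t g = χ n (s + t) g := by
  unfold χ
  rw [← Finset.prod_mul_distrib]
  exact (Finset.prod_congr rfl fun i _ => (aux_add_left _ _ _)).symm

lemma χ_sub (s g h : Fin n → ZMod 2) : χ n s (g - h) = χ n s g * χ n s h := by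
  rw [sub_eq_add_neg, neg_self, χ_add]

lemma χ_zero_left (g : Fin n → ZMod 2) : χ n 0 g = 1 := by
  unfold χ; simp

lemma χ_one_or (s g : Fin n → ZMod 2) : χ n s g = 1 ∨ χ n s g = -1 := by
  unfold χ
  refine Finset.prod_induction _ (fun a => a = 1 ∨ a = -1) ?_ (Or.inl rfl) ?_
  · rintro a b (rfl|rfl) (rfl|rfl) <;> norm_num
  · intro i _
    rcases Nat.even_or_odd (s i * g i).val with h | h
    · left; exact h.neg_one_pow
    · right; exact h.neg_one_pow

lemma χ_single (u : Fin n → ZMod 2) (i0 : Fin n) (h : u i0 ≠ 0) :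
    χ n u (Pi.single i0 1) = -1 := by
  unfold χ
  rw [Finset.prod_eq_single i0]
  · have : u i0 = 1 := by
      have := h; revert this; generalize u i0 = a; revert a; decide
    rw [Pi.single_eq_same, this]
    decide
  · intro j _ hj
    rw [Pi.single_eq_of_ne hj]
    simp
  · simp

lemma sum_χ (u : Fin n → ZMod 2) :
    (∑ g : Fin n → ZMod 2, χ n u g) = if u = 0 then (2:ℤ)^n else 0 := by
  by_cases hu : u = 0
  · subst hu
    simp only [χ_zero_left, Finset.sum_const, Finset.card_univ, if_true]
    rw [Fintype.card_fun]
    simp [ZMod.card]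
  · rw [if_neg hu]
    obtain ⟨i0, hi0⟩ : ∃ i, u i ≠ 0 := by
      by_contra h
      push_neg at h
      exact hu (funext fun i => h i)
    set e : Fin n → ZMod 2 := Pi.single i0 1 with he
    have key : (∑ g : Fin n → ZMod 2, χ n u g)
        = ∑ g : Fin n → ZMod 2, χ n u (g + e) :=
      (Fintype.sum_equiv (Equiv.addRight e) _ _ (fun g => rfl)).symm
    have : (∑ g : Fin n → ZMod 2, χ n u g)
        = -(∑ g : Fin n → ZMod 2, χ n u g) := by
      nth_rewrite 1 [key]
      rw [← Finset.sum_neg_distrib]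
      refine Finset.sum_congr rfl fun g _ => ?_
      rw [χ_add, χ_single u i0 hi0]
      ring
    linarith


def Hm (n : ℕ) : Matrix (Fin n → ZMod 2) (Fin n → ZMod 2) ℤ :=
  Matrix.of fun g s => χ n s g

def lam (n : ℕ) (x : (Fin n → ZMod 2) → ℤ) (s : Fin n → ZMod 2) : ℤ :=
  ∑ k, χ n s k * x k

lemma MH (x : (Fin n → ZMod 2) → ℤ) :
    (Matrix.of fun g h : Fin n → ZMod 2 => x (g - h)) * Hm n
      = Hm n * Matrix.diagonal (lam n x) := by
  ext g s
  rw [Matrix.mul_diagonal, Matrix.mul_apply]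
  show (∑ h, x (g - h) * χ n s h) = χ n s g * lam n x s
  have reidx : (∑ h, x (g - h) * χ n s h)
      = ∑ k : Fin n → ZMod 2, x (g - (g - k)) * χ n s (g - k) :=
    (Fintype.sum_equiv (Equiv.subLeft g) _ _ (fun k => rfl)).symm
  rw [reidx]
  rw [lam, Finset.mul_sum]
  refine Finset.sum_congr rfl fun k _ => ?_
  rw [sub_sub_cancel, χ_sub]
  ring

lemma HtH : (Hm n).transpose * Hm n = ((2:ℤ)^n) • (1 : Matrix (Fin n → ZMod 2) (Fin n → ZMod 2) ℤ) := by
  ext s t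
  rw [Matrix.mul_apply]
  show (∑ g, χ n s g * χ n t g) = _
  have : (∑ g, χ n s g * χ n t g) = ∑ g, χ n (s + t) g :=
    Finset.sum_congr rfl fun g _ => χ_mul s t g
  rw [this, sum_χ]
  have hst : s + t = 0 ↔ s = t := by
    rw [add_eq_zero_iff_eq_neg, neg_self]
  by_cases h : s = t
  · subst h
    simp [hst.mpr rfl, Matrix.smul_apply, Matrix.one_apply]
  · rw [if_neg (fun hc => h (hst.mp hc))]
    simp [Matrix.smul_apply, Matrix.one_apply, h]

lemma detH_ne : Matrix.det (Hm n) ≠ 0 := by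
  intro h
  have := congrArg Matrix.det (HtH (n := n))
  rw [Matrix.det_mul, Matrix.det_transpose, h, mul_zero, Matrix.det_smul,
    Matrix.det_one, mul_one] at this
  have hpos : (0:ℤ) < ((2:ℤ)^n) ^ Fintype.card (Fin n → ZMod 2) :=
    pow_pos (pow_pos two_pos n) _
  rw [← this] at hpos
  exact lt_irrefl 0 hpos

end Cor3Aux

/-- Corollary 3 (1): for `n ≥ 2` and `G = (ℤ/2ℤ)^n`, every even integer group
determinant of `G` is divisible by `2^(2^n)`, i.e.
`S((ℤ/2ℤ)^n)_even ⊆ 2^(2^n) ℤ`. (Additive notation: entry `x (g - h)`.) -/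
theorem detSetEven_elementaryTwoGroup_subset
    (n : ℕ) (hn : 2 ≤ n) (d : ℤ)
    (hd : ∃ x : (Fin n → ZMod 2) → ℤ,
      d = Matrix.det (Matrix.of fun g h : Fin n → ZMod 2 => x (g - h)))
    (heven : 2 ∣ d) :
    (2 : ℤ) ^ (2 ^ n) ∣ d := by
  obtain ⟨x, rfl⟩ := hd
  open Cor3Aux in
  have hdet : Matrix.det (Matrix.of fun g h : Fin n → ZMod 2 => x (g - h))
      = ∏ s : Fin n → ZMod 2, lam n x s := by
    have := congrArg Matrix.det (MH x)
    rw [Matrix.det_mul, Matrix.det_mul, Matrix.det_diagonal, mul_comm] at this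
    exact mul_left_cancel₀ detH_ne this
  rw [hdet] at heven ⊢
  obtain ⟨s0, _, hs0⟩ := (Int.prime_two.dvd_finset_prod_iff _).mp heven
  have hall : ∀ s : Fin n → ZMod 2, 2 ∣ lam n x s := by
    intro s
    have hdiff : 2 ∣ lam n x s - lam n x s0 := by
      rw [lam, lam, ← Finset.sum_sub_distrib]
      refine Finset.dvd_sum fun k _ => ?_
      rw [← sub_mul]
      refine Dvd.dvd.mul_right ?_ _
      rcases χ_one_or s k with h1 | h1 <;> rcases χ_one_or s0 k with h2 | h2 <;>
        rw [h1, h2] <;> norm_num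
    omega
  have : (∏ _s : Fin n → ZMod 2, (2:ℤ)) ∣ ∏ s : Fin n → ZMod 2, lam n x s :=
    Finset.prod_dvd_prod_of_dvd _ _ fun s _ => hall s
  rwa [Finset.prod_const, Finset.card_univ, Fintype.card_fun,
    ZMod.card, Fintype.card_fin] at this
end

section
/- For every n ≥ 2 and for G = ℤ/2^nℤ × ℤ/2ℤ, every even integer group determinant of G is divisible by 2^{2(n+2)}; that is, S(ℤ/2^nℤ × ℤ/2ℤ)_even ⊆ 2^{2(n+2)} ℤ. -/
open Matrix Finset

lemma det_blocks {R n : Type*} [CommRing R] [DecidableEq n] [Fintype n] (A B : Matrix n n R) :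
    (Matrix.fromBlocks A B B A).det = (A + B).det * (A - B).det := by
  have h : Matrix.fromBlocks (1:Matrix n n R) 1 0 1 * Matrix.fromBlocks A B B A *
      Matrix.fromBlocks 1 (-1:Matrix n n R) 0 1 = Matrix.fromBlocks (A+B) 0 B (A-B) := by
    rw [Matrix.fromBlocks_multiply, Matrix.fromBlocks_multiply]
    have h1 : ∀ X Y : Matrix n n R, (1*X+1*Y)*1 + (1*Y+1*X)*0 = X + Y := by intros; noncomm_ring
    have h2 : ∀ X Y : Matrix n n R, (1*X+1*Y)*(-1) + (1*Y+1*X)*1 = 0 := by intros; noncomm_ring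
    have h3 : ∀ X Y : Matrix n n R, (0*X+1*Y)*1 + (0*Y+1*X)*0 = Y := by intros; noncomm_ring
    have h4 : ∀ X Y : Matrix n n R, (0*X+1*Y)*(-1) + (0*Y+1*X)*1 = X - Y := by intros; noncomm_ring
    rw [h1, h2, h3, h4]
  have h2 := congrArg Matrix.det h
  rw [Matrix.det_mul, Matrix.det_mul, Matrix.det_fromBlocks_zero₂₁,
    Matrix.det_fromBlocks_zero₂₁, Matrix.det_fromBlocks_zero₁₂, Matrix.det_one] at h2
  simpa using h2

lemma det_split {R : Type*} [CommRing R] (m : ℕ) (x : ℤ → R)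
    (hx : ∀ t : ℤ, x (t + 2*(m:ℤ)) = x t) :
    (Matrix.of fun i j : Fin (2*m) => x ((i:ℤ) - (j:ℤ))).det
      = (Matrix.of fun i j : Fin m => x ((i:ℤ) - (j:ℤ)) + x ((i:ℤ) - (j:ℤ) + (m:ℤ))).det
        * (Matrix.of fun i j : Fin m => x ((i:ℤ) - (j:ℤ)) - x ((i:ℤ) - (j:ℤ) + (m:ℤ))).det := by
  have key : ∀ t : ℤ, x (t - 2*(m:ℤ)) = x t := by
    intro t
    have := hx (t - 2*(m:ℤ))
    rw [show t - 2*(m:ℤ) + 2*(m:ℤ) = t by ring] at this; exact this.symm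
  have h2m : m + m = 2*m := by omega
  set e : Fin m ⊕ Fin m ≃ Fin (2*m) := finSumFinEquiv.trans (finCongr h2m) with he
  have hel : ∀ i : Fin m, ((e (Sum.inl i) : Fin (2*m)) : ℕ) = (i:ℕ) := by
    intro i; simp [he]
  have her : ∀ i : Fin m, ((e (Sum.inr i) : Fin (2*m)) : ℕ) = m + (i:ℕ) := by
    intro i; simp [he]; omega
  rw [← Matrix.det_submatrix_equiv_self e]
  have hsub : (Matrix.of fun i j : Fin (2*m) => x ((i:ℤ) - (j:ℤ))).submatrix e e
      = Matrix.fromBlocks (Matrix.of fun i j : Fin m => x ((i:ℤ) - (j:ℤ)))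
        (Matrix.of fun i j : Fin m => x ((i:ℤ) - (j:ℤ) + (m:ℤ)))
        (Matrix.of fun i j : Fin m => x ((i:ℤ) - (j:ℤ) + (m:ℤ)))
        (Matrix.of fun i j : Fin m => x ((i:ℤ) - (j:ℤ))) := by
    ext i j
    rcases i with i | i <;> rcases j with j | j <;>
        simp only [Matrix.submatrix_apply, Matrix.of_apply, Matrix.fromBlocks_apply₁₁,
          Matrix.fromBlocks_apply₁₂, Matrix.fromBlocks_apply₂₁, Matrix.fromBlocks_apply₂₂,
          hel, her]
    · rw [show ((i:ℤ) - ((m:ℕ) + (j:ℕ) : ℕ)) = ((i:ℤ) - (j:ℤ) + m) - 2*(m:ℤ) by push_cast; ring,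
        key]
    · rw [show (((m:ℕ) + (i:ℕ) : ℕ) - (j:ℤ) : ℤ) = ((i:ℤ) - (j:ℤ) + m) by push_cast; ring]
    · rw [show (((m:ℕ) + (i:ℕ) : ℕ) - (((m:ℕ) + (j:ℕ) : ℕ)) : ℤ) = ((i:ℤ) - (j:ℤ)) by
        push_cast; ring]
  rw [hsub, det_blocks]
  congr 1

lemma det_mod2 : ∀ (k : ℕ) (x : ℤ → ZMod 2), (∀ t : ℤ, x (t + (2^k : ℕ)) = x t) →
    (Matrix.of fun i j : Fin (2^k) => x ((i:ℤ) - (j:ℤ))).det = ∑ j ∈ range (2^k), x (j:ℤ) := by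
  intro k
  induction k with
  | zero =>
    intro x hx
    simp [pow_zero]
  | succ k ih =>
    intro x hx
    have h2 : (2:ℕ)^(k+1) = 2 * 2^k := by ring
    have hx' : ∀ t : ℤ, x (t + 2*((2^k : ℕ):ℤ)) = x t := by
      intro t; have := hx t; rwa [show ((((2:ℕ)^(k+1) : ℕ)):ℤ) = 2*((2^k:ℕ):ℤ) by push_cast; ring] at this
    rw [h2, det_split (2^k) x hx']
    have hsubeq : (Matrix.of fun i j : Fin (2^k) => x ((i:ℤ) - (j:ℤ)) - x ((i:ℤ) - (j:ℤ) + ((2^k:ℕ):ℤ)))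
        = (Matrix.of fun i j : Fin (2^k) => x ((i:ℤ) - (j:ℤ)) + x ((i:ℤ) - (j:ℤ) + ((2^k:ℕ):ℤ))) := by
      ext i j
      simp only [Matrix.of_apply]
      generalize x ((i:ℤ) - (j:ℤ)) = a
      generalize x ((i:ℤ) - (j:ℤ) + ((2^k:ℕ):ℤ)) = b
      revert a b; decide
    rw [hsubeq]
    set u : ℤ → ZMod 2 := fun t => x t + x (t + ((2^k:ℕ):ℤ)) with hu
    have hup : ∀ t : ℤ, u (t + (2^k : ℕ)) = u t := by
      intro t
      simp only [hu]
      have h1 : x (t + (2^k:ℕ) + ((2^k:ℕ):ℤ)) = x t := by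
        rw [show t + ((2^k:ℕ):ℤ) + ((2^k:ℕ):ℤ) = t + 2*((2^k:ℕ):ℤ) by ring, hx' t]
      rw [h1]
      exact add_comm _ _
    have := ih u hup
    rw [show (Matrix.of fun i j : Fin (2^k) => x ((i:ℤ) - (j:ℤ)) + x ((i:ℤ) - (j:ℤ) + ((2^k:ℕ):ℤ)))
        = (Matrix.of fun i j : Fin (2^k) => u ((i:ℤ) - (j:ℤ))) from rfl, this]
    have hsum : ∑ j ∈ range (2*2^k), x (j:ℤ) = ∑ j ∈ range (2^k), u (j:ℤ) := by
      rw [show 2*2^k = 2^k + 2^k by ring, Finset.sum_range_add]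
      simp only [hu]
      rw [Finset.sum_add_distrib]
      congr 1
      refine Finset.sum_congr rfl fun i _ => ?_
      congr 1
      push_cast
      ring
    rw [← hsum]
    generalize (∑ j ∈ range (2*2^k), x (j:ℤ)) = s
    revert s; decide

lemma det_cast_mod2 (k : ℕ) (y : ℤ → ℤ)
    (hy : ∀ t : ℤ, ((y (t + ((2^k:ℕ):ℤ)) : ZMod 2)) = (y t : ZMod 2)) :
    (((Matrix.of fun i j : Fin (2^k) => y ((i:ℤ) - (j:ℤ))).det : ℤ) : ZMod 2)
      = ((∑ j ∈ range (2^k), y (j:ℤ) : ℤ) : ZMod 2) := by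
  have h := det_mod2 k (fun t => (y t : ZMod 2)) hy
  have hmap : (((Matrix.of fun i j : Fin (2^k) => y ((i:ℤ) - (j:ℤ))).det : ℤ) : ZMod 2)
      = ((Matrix.of fun i j : Fin (2^k) => y ((i:ℤ) - (j:ℤ))).map
          (Int.castRingHom (ZMod 2))).det :=
    RingHom.map_det (Int.castRingHom (ZMod 2)) _
  rw [hmap]
  have hM : ((Matrix.of fun i j : Fin (2^k) => y ((i:ℤ) - (j:ℤ))).map
      (Int.castRingHom (ZMod 2)))
      = (Matrix.of fun i j : Fin (2^k) => ((fun t : ℤ => ((y t : ZMod 2))) ((i:ℤ) - (j:ℤ)))) := rfl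
  rw [hM, h]
  push_cast
  rfl

lemma circ_dvd_iff (k : ℕ) (y : ℤ → ℤ) (hy : ∀ t : ℤ, y (t + ((2^k:ℕ):ℤ)) = y t) :
    ((2:ℤ) ∣ (Matrix.of fun i j : Fin (2^k) => y ((i:ℤ) - (j:ℤ))).det
      ↔ (2:ℤ) ∣ ∑ j ∈ range (2^k), y (j:ℤ)) := by
  have dvd2 : ∀ z : ℤ, (2:ℤ) ∣ z ↔ ((z : ZMod 2) = 0) := fun z => by
    rw [ZMod.intCast_zmod_eq_zero_iff_dvd]; norm_num
  have h := det_cast_mod2 k y (fun t => by rw [hy])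
  rw [dvd2, dvd2, h]

lemma neg_even (k : ℕ) (w : ℤ → ℤ) (hw : ∀ t : ℤ, w (t + ((2^k:ℕ):ℤ)) = - w t)
    (hs : (2:ℤ) ∣ ∑ j ∈ range (2^k), w (j:ℤ)) :
    (2:ℤ) ∣ (Matrix.of fun i j : Fin (2^k) => w ((i:ℤ) - (j:ℤ))).det := by
  have hneg : ∀ a : ZMod 2, -a = a := by decide
  have dvd2 : ∀ z : ℤ, (2:ℤ) ∣ z ↔ ((z : ZMod 2) = 0) := fun z => by
    rw [ZMod.intCast_zmod_eq_zero_iff_dvd]; norm_num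
  have h := det_cast_mod2 k w (fun t => by rw [hw]; push_cast; rw [hneg])
  rw [dvd2, h, ← dvd2]
  exact hs

lemma arith (a b c d : ℤ) (h1 : 2 ∣ a - c) (h2 : 2 ∣ b - d) (h3 : 2 ∣ a + b) :
    16 ∣ (a+b)*(a-b)*(c^2+d^2) := by
  rcases Int.even_or_odd c with hc | hc
  · -- c even, then d even, a even, b even
    obtain ⟨c', rfl⟩ := hc
    have hd : ∃ d', d = d' + d' := by
      rcases Int.even_or_odd d with ⟨d', rfl⟩ | ⟨d', rfl⟩
      · exact ⟨d', rfl⟩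
      · exfalso; omega
    obtain ⟨d', rfl⟩ := hd
    obtain ⟨s, hs⟩ := h1
    obtain ⟨t, ht⟩ := h2
    have ha : a = 2*(c' + s) := by omega
    have hb : b = 2*(d' + t) := by omega
    subst ha hb
    exact ⟨(c'+s+(d'+t))*((c'+s)-(d'+t))*(c'^2+d'^2), by ring⟩
  · -- c odd, d odd, a odd, b odd
    obtain ⟨γ, rfl⟩ := hc
    have hd : ∃ δ, d = 2*δ + 1 := by
      rcases Int.even_or_odd d with ⟨δ, rfl⟩ | ⟨δ, rfl⟩
      · exfalso; omega
      · exact ⟨δ, rfl⟩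
    obtain ⟨δ, rfl⟩ := hd
    obtain ⟨s, hs⟩ := h1
    obtain ⟨t, ht⟩ := h2
    have ha : a = 2*(γ + s) + 1 := by omega
    have hb : b = 2*(δ + t) + 1 := by omega
    subst ha hb
    set A := (γ + s) + (δ + t) + 1 with hA
    set B := (γ + s) - (δ + t) with hB
    have hpar : Even (A * B) := by
      rcases Int.even_or_odd A with hA' | hA'
      · exact hA'.mul_right _
      · have : Even B := by
          rcases hA' with ⟨p, hp⟩
          exact ⟨(γ+s) - p, by omega⟩
        exact this.mul_left _
    obtain ⟨P, hP⟩ := hpar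
    refine ⟨P * (2*(γ^2 + γ + δ^2 + δ) + 1), ?_⟩
    have key : (2*(γ+s)+1 + (2*(δ+t)+1)) * (2*(γ+s)+1 - (2*(δ+t)+1)) * ((2*γ+1)^2 + (2*δ+1)^2)
        = 8 * (A*B) * (2*(γ^2 + γ + δ^2 + δ) + 1) := by rw [hA, hB]; ring
    rw [key, hP]
    ring

lemma kaib : ∀ n : ℕ, 2 ≤ n → ∀ y : ℤ → ℤ, (∀ t : ℤ, y (t + ((2^n:ℕ):ℤ)) = y t) →
    (2:ℤ) ∣ ∑ j ∈ range (2^n), y (j:ℤ) →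
    (2:ℤ)^(n+2) ∣ (Matrix.of fun i j : Fin (2^n) => y ((i:ℤ) - (j:ℤ))).det := by
  intro n hn
  induction n, hn using Nat.le_induction with
  | base =>
    intro y hy hs
    have hper : ∀ t : ℤ, y (t + 4) = y t := by
      intro t; have := hy t; norm_num at this; exact this
    have hy' : ∀ t : ℤ, y (t + 2*((2:ℕ):ℤ)) = y t := by
      intro t; have := hper t; norm_num; exact this
    have h4 : (2:ℕ)^2 = 2*2 := rfl
    rw [h4, det_split 2 y hy', Matrix.det_fin_two, Matrix.det_fin_two]
    simp only [Matrix.of_apply]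
    have c00 : ((0:Fin 2):ℤ) - ((0:Fin 2):ℤ) = 0 := by norm_num
    have c01 : ((0:Fin 2):ℤ) - ((1:Fin 2):ℤ) = -1 := by norm_num
    have c10 : ((1:Fin 2):ℤ) - ((0:Fin 2):ℤ) = 1 := by norm_num
    rw [c00, c01, c10]
    norm_num
    have hm1 : y (-1) = y 3 := by have := hper (-1); norm_num at this; exact this.symm
    rw [hm1]
    -- now goal in terms of y 0, y 1, y 2, y 3
    have key := arith (y 0 + y 2) (y 1 + y 3) (y 0 - y 2) (y 1 - y 3)
      ⟨y 2, by ring⟩ ⟨y 3, by ring⟩ (by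
        have : ∑ j ∈ range (2^2), y (j:ℤ) = y 0 + y 1 + y 2 + y 3 := by
          rw [show (2:ℕ)^2 = 4 from rfl]
          rw [Finset.sum_range_succ, Finset.sum_range_succ, Finset.sum_range_succ,
            Finset.sum_range_one]
          norm_num
        rw [this] at hs
        omega)
    obtain ⟨q, hq⟩ := key
    exact ⟨q, by rw [← hq]; ring⟩
  | succ n hn ih =>
    intro y hy hs
    have h2 : (2:ℕ)^(n+1) = 2*2^n := by ring
    have hy' : ∀ t : ℤ, y (t + 2*(((2:ℕ)^n:ℕ):ℤ)) = y t := by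
      intro t; have := hy t
      rwa [show (((2:ℕ)^(n+1) : ℕ):ℤ) = 2*(((2:ℕ)^n:ℕ):ℤ) by push_cast; ring] at this
    rw [h2, det_split (2^n) y hy']
    set u : ℤ → ℤ := fun t => y t + y (t + ((2^n:ℕ):ℤ)) with hu
    set w : ℤ → ℤ := fun t => y t - y (t + ((2^n:ℕ):ℤ)) with hw
    have hyy : ∀ t : ℤ, y (t + ((2^n:ℕ):ℤ) + ((2^n:ℕ):ℤ)) = y t := by
      intro t; rw [show t + ((2^n:ℕ):ℤ) + ((2^n:ℕ):ℤ) = t + 2*((2^n:ℕ):ℤ) by ring, hy']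
    have hup : ∀ t : ℤ, u (t + ((2^n:ℕ):ℤ)) = u t := by
      intro t; simp only [hu]; rw [hyy t]; ring
    have hwp : ∀ t : ℤ, w (t + ((2^n:ℕ):ℤ)) = - w t := by
      intro t; simp only [hw]; rw [hyy t]; ring
    have hsum : ∑ j ∈ range (2*2^n), y (j:ℤ)
        = ∑ j ∈ range (2^n), u (j:ℤ) := by
      rw [show 2*2^n = 2^n + 2^n by ring, Finset.sum_range_add]
      simp only [hu]
      rw [Finset.sum_add_distrib]
      congr 1
      refine Finset.sum_congr rfl fun i _ => ?_
      congr 1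
      push_cast
      ring
    have hsu : (2:ℤ) ∣ ∑ j ∈ range (2^n), u (j:ℤ) := by
      rw [← hsum]
      rwa [show (2:ℕ)^(n+1) = 2*2^n by ring] at hs
    have hsw : (2:ℤ) ∣ ∑ j ∈ range (2^n), w (j:ℤ) := by
      have hd : ∑ j ∈ range (2^n), u (j:ℤ) - ∑ j ∈ range (2^n), w (j:ℤ)
          = 2 * ∑ j ∈ range (2^n), y ((j:ℤ) + ((2^n:ℕ):ℤ)) := by
        rw [← Finset.sum_sub_distrib, Finset.mul_sum]
        refine Finset.sum_congr rfl fun i _ => ?_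
        simp only [hu, hw]; ring
      omega
    have d1 := ih u hup hsu
    have d2 := neg_even n w hwp hsw
    have : (2:ℤ)^(n+1+2) = 2^(n+2) * 2 := by ring
    rw [this]
    exact mul_dvd_mul d1 d2

lemma zmod_to_fin (m : ℕ) [NeZero m] (u : ZMod m → ℤ) :
    (Matrix.of fun g h : ZMod m => u (g - h)).det
      = (Matrix.of fun i j : Fin m => (fun t : ℤ => u ((t : ZMod m))) ((i:ℤ) - (j:ℤ))).det := by
  have hinj : Function.Injective (fun i : Fin m => ((i : ℕ) : ZMod m)) := by
    intro i j h
    apply Fin.ext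
    have := congrArg ZMod.val h
    simpa [ZMod.val_cast_of_lt i.isLt, ZMod.val_cast_of_lt j.isLt] using this
  have hbij : Function.Bijective (fun i : Fin m => ((i : ℕ) : ZMod m)) :=
    (Fintype.bijective_iff_injective_and_card _).mpr ⟨hinj, by simp [ZMod.card]⟩
  set e : Fin m ≃ ZMod m := Equiv.ofBijective _ hbij with he
  rw [← Matrix.det_submatrix_equiv_self e]
  congr 1
  ext i j
  simp only [Matrix.submatrix_apply, Matrix.of_apply]
  have : e i - e j = (((i:ℤ) - (j:ℤ) : ℤ) : ZMod m) := by
    simp only [he, Equiv.ofBijective_apply]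
    push_cast
    ring
  rw [this]

lemma det_mod2_congr {I : Type*} [Fintype I] [DecidableEq I] (M N : Matrix I I ℤ)
    (h : ∀ i j, ((M i j : ZMod 2)) = ((N i j : ZMod 2))) :
    ((M.det : ℤ) : ZMod 2) = ((N.det : ℤ) : ZMod 2) := by
  have h1 : ((M.det : ℤ) : ZMod 2) = (M.map (Int.castRingHom (ZMod 2))).det :=
    RingHom.map_det (Int.castRingHom (ZMod 2)) M
  have h2 : ((N.det : ℤ) : ZMod 2) = (N.map (Int.castRingHom (ZMod 2))).det :=
    RingHom.map_det (Int.castRingHom (ZMod 2)) N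
  rw [h1, h2]
  congr 1
  ext i j
  simpa using h i j

/-- kaib in ZMod-indexed form -/

lemma kaib_zmod (n : ℕ) (hn : 2 ≤ n) (u : ZMod (2^n) → ℤ)
    (hdvd : (2:ℤ) ∣ (Matrix.of fun g h : ZMod (2^n) => u (g - h)).det) :
    (2:ℤ)^(n+2) ∣ (Matrix.of fun g h : ZMod (2^n) => u (g - h)).det := by
  haveI : NeZero ((2:ℕ)^n) := ⟨by positivity⟩
  rw [zmod_to_fin] at hdvd ⊢
  set y : ℤ → ℤ := fun t : ℤ => u ((t : ZMod (2^n))) with hy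
  have hper : ∀ t : ℤ, y (t + ((2^n:ℕ):ℤ)) = y t := by
    intro t
    simp only [hy]
    congr 1
    rw [Int.cast_add, Int.cast_natCast, ZMod.natCast_self, add_zero]
  exact kaib n hn y hper ((circ_dvd_iff n y hper).mp hdvd)

/-- Corollary 3 (2): for `n ≥ 2` and `G = ℤ/2ⁿℤ × ℤ/2ℤ`, every even integer
group determinant of `G` is divisible by `2^(2(n+2))`, i.e.
`S(ℤ/2ⁿℤ × ℤ/2ℤ)_even ⊆ 2^(2(n+2)) ℤ`. (Additive notation: entry `x (g - h)`.) -/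
theorem detSetEven_zmodPowTwo_prod_subset
    (n : ℕ) (hn : 2 ≤ n) (d : ℤ)
    (hd : ∃ x : ZMod (2 ^ n) × ZMod 2 → ℤ,
      d = Matrix.det (Matrix.of fun g h : ZMod (2 ^ n) × ZMod 2 => x (g - h)))
    (heven : 2 ∣ d) :
    (2 : ℤ) ^ (2 * (n + 2)) ∣ d := by
  obtain ⟨x, rfl⟩ := hd
  let e : ZMod (2^n) ⊕ ZMod (2^n) ≃ ZMod (2^n) × ZMod 2 :=
    { toFun := Sum.elim (fun g => (g, 0)) (fun g => (g, 1))
      invFun := fun p => if p.2 = 0 then Sum.inl p.1 else Sum.inr p.1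
      left_inv := by rintro (g|g) <;> simp
      right_inv := by
        rintro ⟨g, ε⟩
        fin_cases ε <;> rfl }
  have hel : ∀ g : ZMod (2^n), e (Sum.inl g) = (g, 0) := fun g => rfl
  have her : ∀ g : ZMod (2^n), e (Sum.inr g) = (g, 1) := fun g => rfl
  rw [← Matrix.det_submatrix_equiv_self e] at heven ⊢
  have hsub : (Matrix.of fun g h : ZMod (2^n) × ZMod 2 => x (g - h)).submatrix e e
      = Matrix.fromBlocks (Matrix.of fun g h : ZMod (2^n) => x (g - h, 0))
          (Matrix.of fun g h : ZMod (2^n) => x (g - h, 1))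
          (Matrix.of fun g h : ZMod (2^n) => x (g - h, 1))
          (Matrix.of fun g h : ZMod (2^n) => x (g - h, 0)) := by
    ext i j
    rcases i with g | g <;> rcases j with h | h <;>
      simp only [Matrix.submatrix_apply, hel, her, Matrix.of_apply,
        Matrix.fromBlocks_apply₁₁, Matrix.fromBlocks_apply₁₂,
        Matrix.fromBlocks_apply₂₁, Matrix.fromBlocks_apply₂₂,
        Prod.mk_sub_mk] <;> rfl
  rw [hsub, det_blocks] at heven ⊢
  set u : ZMod (2^n) → ℤ := fun g => x (g, 0) + x (g, 1) with hu
  set v : ZMod (2^n) → ℤ := fun g => x (g, 0) - x (g, 1) with hv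
  have hmu : (Matrix.of fun g h : ZMod (2^n) => x (g - h, 0))
        + (Matrix.of fun g h : ZMod (2^n) => x (g - h, 1))
      = Matrix.of fun g h : ZMod (2^n) => u (g - h) := by ext g h; simp [hu]
  have hmv : (Matrix.of fun g h : ZMod (2^n) => x (g - h, 0))
        - (Matrix.of fun g h : ZMod (2^n) => x (g - h, 1))
      = Matrix.of fun g h : ZMod (2^n) => v (g - h) := by ext g h; simp [hv]
  rw [hmu, hmv] at heven ⊢
  have hcast := det_mod2_congr (Matrix.of fun g h : ZMod (2^n) => u (g - h))
      (Matrix.of fun g h : ZMod (2^n) => v (g - h)) (by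
    intro g h
    simp only [Matrix.of_apply, hu, hv]
    push_cast
    have hne : ∀ p q : ZMod 2, p + q = p - q := by decide
    exact hne _ _)
  have hdvd2 : ∀ z : ℤ, (2:ℤ) ∣ z ↔ ((z : ZMod 2) = 0) := fun z => by
    rw [ZMod.intCast_zmod_eq_zero_iff_dvd]; norm_num
  have hDu2 : (2:ℤ) ∣ (Matrix.of fun g h : ZMod (2^n) => u (g - h)).det := by
    rw [hdvd2]
    have h0 : (((Matrix.of fun g h : ZMod (2^n) => u (g - h)).det
        * (Matrix.of fun g h : ZMod (2^n) => v (g - h)).det : ℤ) : ZMod 2) = 0 := by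
      rw [← hdvd2]; exact heven
    rw [Int.cast_mul, ← hcast] at h0
    have hc : ∀ c : ZMod 2, c * c = 0 → c = 0 := by decide
    exact hc _ h0
  have hDv2 : (2:ℤ) ∣ (Matrix.of fun g h : ZMod (2^n) => v (g - h)).det := by
    rw [hdvd2, ← hcast, ← hdvd2]
    exact hDu2
  have k1 := kaib_zmod n hn u hDu2
  have k2 := kaib_zmod n hn v hDv2
  have h22 : (2:ℤ)^(2*(n+2)) = 2^(n+2) * 2^(n+2) := by ring
  rw [h22]
  exact mul_dvd_mul k1 k2
end

section
/- Let H be a finite abelian group, K = (ℤ/2ℤ)^l, G = H × K, and x : G → ℤ. For a character χ of K (a homomorphism K → ℂˣ, necessarily taking values in {±1}), set α_χ := det (fun (h h' : H) => ∑_{k ∈ K} χ(k) * x((h * h'⁻¹, k))), which is an integer. Then for every character χ of K, α_χ ≡ α_{χ₁} (mod 2), where χ₁ is the trivial character of K. -/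
/-!
Since `K` has exponent two, every character of `K` takes the values `±1`, so the matrix defining
`α_χ` has integer entries, and each of them is congruent mod 2 to the corresponding entry of the
matrix for the trivial character. The determinant is a polynomial in the entries with integer
coefficients, hence it respects congruences.
-/

protected theorem Int.ModEq.det {n : Type*} [Fintype n] [DecidableEq n] {m : ℕ}
    {A B : Matrix n n ℤ} (h : ∀ i j, A i j ≡ B i j [ZMOD m]) : A.det ≡ B.det [ZMOD m] := by
  rw [← ZMod.intCast_eq_intCast_iff, Int.cast_det, Int.cast_det]
  congr 1
  ext i j
  exact (ZMod.intCast_eq_intCast_iff _ _ _).mpr (h i j)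

theorem MonoidHom.val_eq_one_or_neg_one {K R : Type*} [Monoid K] [Ring R] [NoZeroDivisors R]
    (χ : K →* Rˣ) {k : K} (hk : k * k = 1) : (χ k : R) = 1 ∨ (χ k : R) = -1 :=
  mul_self_eq_one_iff.mp (by rw [← Units.val_mul, ← map_mul, hk, map_one, Units.val_one])

theorem exists_intCast_eq_and_modEq_one {R : Type*} [Ring R] {u : R} (hu : u = 1 ∨ u = -1) :
    ∃ n : ℤ, (n : R) = u ∧ n ≡ 1 [ZMOD 2] := by
  rcases hu with rfl | rfl
  · exact ⟨1, Int.cast_one, rfl⟩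
  · exact ⟨-1, by push_cast; rfl, by decide⟩

theorem pi_zmod_two_mul_self_eq_one {ι : Type*} (k : Multiplicative (ι → ZMod 2)) : k * k = 1 :=
  funext fun _ => CharTwo.add_self_eq_zero _

/-- Let `H` be a finite abelian group, `K = (ℤ/2ℤ)^l`, and `x : H × K → ℤ`.
For a character `χ : K →* ℂˣ` (necessarily taking values in `{±1}`), set
`α_χ := det (fun h h' => ∑ k ∈ K, χ(k) · x(h h'⁻¹, k))`, an integer. Then
`α_χ ≡ α_{χ₁} (mod 2)` where `χ₁` is the trivial character: their difference
is `2 m` for some integer `m`. -/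
theorem alpha_chi_congruent_mod_two
    (H : Type*) [CommGroup H] [Fintype H] [DecidableEq H] (l : ℕ)
    (x : H × Multiplicative (Fin l → ZMod 2) → ℤ)
    (χ : Multiplicative (Fin l → ZMod 2) →* ℂˣ) :
    ∃ m : ℤ,
      Matrix.det (Matrix.of fun h h' : H =>
        ∑ k : Multiplicative (Fin l → ZMod 2), (χ k : ℂ) * (x (h * h'⁻¹, k) : ℂ)) -
      Matrix.det (Matrix.of fun h h' : H =>
        ∑ k : Multiplicative (Fin l → ZMod 2),
          (((1 : Multiplicative (Fin l → ZMod 2) →* ℂˣ) k : ℂˣ) : ℂ) * (x (h * h'⁻¹, k) : ℂ))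
      = 2 * (m : ℂ) := by
  choose ε hε_cast hε_odd using fun k =>
    exists_intCast_eq_and_modEq_one (χ.val_eq_one_or_neg_one (pi_zmod_two_mul_self_eq_one k))
  let A : Matrix H H ℤ := .of fun h h' => ∑ k, ε k * x (h * h'⁻¹, k)
  let B : Matrix H H ℤ := .of fun h h' => ∑ k, x (h * h'⁻¹, k)
  have hAB : A.det ≡ B.det [ZMOD 2] := Int.ModEq.det fun h h' =>
    Int.ModEq.sum fun k _ => by simpa using (hε_odd k).mul_right (x (h * h'⁻¹, k))
  obtain ⟨m, hm⟩ := hAB.symm.dvd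
  refine ⟨m, ?_⟩
  have hA : (A.map (↑) : Matrix H H ℂ) =
      .of fun h h' => ∑ k, (χ k : ℂ) * (x (h * h'⁻¹, k) : ℂ) := by
    ext; simp [A, hε_cast]
  have hB : (B.map (↑) : Matrix H H ℂ) =
      .of fun h h' => ∑ k, ((1 : _ →* ℂˣ) k : ℂ) * (x (h * h'⁻¹, k) : ℂ) := by
    ext; simp [B]
  rw [← hA, ← hB, ← Int.cast_det, ← Int.cast_det]
  exact_mod_cast hm
end
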